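/- Overcounting bound for the N = 0 NoBLE coefficient (from the proof of Lemma 4.1): for every d ≥ 2, every p ∈ [0,1] and every x ∈ ℤ^d with x ≠ 0, Σ_{κ ∈ {±1,…,±d}} ℙ_p({0 ⇔ x} ∩ {x − e_κ ∉ C̃^{{x, x−e_κ}}(x)}) ≤ (2d − 2)·ℙ_p(0 ⇔ x). -/

import Mathlib

open MeasureTheory Filter
open scoped ENNReal

namespace NoBLE

/-- Vertices of the hypercubic lattice `ℤ^d`. -/
abbrev Vertex (d : ℕ) := Fin d → ℤ

/-- The Euclidean norm `‖x‖₂` of a lattice point. -/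
noncomputable def norm2 {d : ℕ} (x : Vertex d) : ℝ :=
  Real.sqrt (∑ i, ((x i : ℝ)) ^ 2)

/-- The `ℓ¹`-norm `‖x‖₁` of a lattice point. -/
def norm1 {d : ℕ} (x : Vertex d) : ℤ := ∑ i, |x i|

/-- The standard unit vector `e_i`. -/
def basis {d : ℕ} (i : Fin d) : Vertex d := fun j => if j = i then 1 else 0

/-- Directions `ι ∈ {±1, …, ±d}`: `(i, true)` stands for `+e_i`, `(i, false)` for `−e_i`. -/
abbrev Dir (d : ℕ) := Fin d × Bool

/-- The unit vector `e_ι` attached to the direction `ι`. -/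
def dirVec {d : ℕ} (ι : Dir d) : Vertex d := if ι.2 then basis ι.1 else -basis ι.1

/-- The opposite direction `−ι`. -/
def dirNeg {d : ℕ} (ι : Dir d) : Dir d := (ι.1, !ι.2)

/-- Nearest-neighbour bonds of `ℤ^d`: the pair `(x, i)` encodes the undirected bond
`{x, x + e_i}`; every nearest-neighbour bond has a unique such representation. -/
abbrev Bond (d : ℕ) := Vertex d × Fin d

/-- Bond configurations: each bond is either occupied (`true`) or vacant (`false`). -/
abbrev Config (d : ℕ) := Bond d → Bool

noncomputable instance (d : ℕ) : Encodable (Bond d) := Encodable.ofCountable _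

/-- The undirected nearest-neighbour bond `{x, y}` is occupied in the configuration `ω`. -/
def Occ {d : ℕ} (ω : Config d) (x y : Vertex d) : Prop :=
  (∃ i, y = x + basis i ∧ ω (x, i) = true) ∨ (∃ i, x = y + basis i ∧ ω (y, i) = true)

/-- `x ↔ y`: `x` and `y` are joined by a path of occupied bonds (in particular `x ↔ x`). -/
def Conn {d : ℕ} (ω : Config d) (x y : Vertex d) : Prop :=
  Relation.ReflTransGen (Occ ω) x y

/-- Splitting a uniform-`[0,1)` random variable into an i.i.d. sequence of Bernoulli(`p`)
bits: `bit p n u` is the `n`-th bit. -/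
noncomputable def bit (p : ℝ) : ℕ → ℝ → Bool
  | 0 => fun u => if u < p then true else false
  | n + 1 => fun u => bit p n (if u < p then u / p else (u - p) / (1 - p))

/-- The Bernoulli(`p`) bond-percolation measure `ℙ_p` on `Config d`, i.e. the product over
all bonds of Bernoulli(`p`) measures on `{occupied, vacant}`; it is realised as the joint
law of the i.i.d. Bernoulli(`p`) family `(bit p (encode b))_{b : Bond d}` driven by a
uniform random variable on `[0,1)`. -/
noncomputable def percMeasure (d : ℕ) (p : ℝ) : Measure (Config d) :=
  Measure.map (fun u => fun b : Bond d => bit p (Encodable.encode b) u)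
    (volume.restrict (Set.Ico (0 : ℝ) 1))

/-- The two-point function `τ_p(x) = ℙ_p(0 ↔ x)`, as an extended real number. -/
noncomputable def tauE (d : ℕ) (p : ℝ) (x : Vertex d) : ℝ≥0∞ :=
  percMeasure d p {ω | Conn ω 0 x}

/-- The two-point function `τ_p(x) = ℙ_p(0 ↔ x)`, as a real number. -/
noncomputable def tau (d : ℕ) (p : ℝ) (x : Vertex d) : ℝ := (tauE d p x).toReal

/-- The susceptibility `χ(p) = Σ_{x ∈ ℤ^d} τ_p(x) ∈ [0, ∞]`. -/
noncomputable def chi (d : ℕ) (p : ℝ) : ℝ≥0∞ := ∑' x : Vertex d, tauE d p x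

/-- The critical point `p_c(d) = sup { p ∈ [0,1] : χ(p) < ∞ }`. -/
noncomputable def pc (d : ℕ) : ℝ := sSup {p : ℝ | p ∈ Set.Icc (0 : ℝ) 1 ∧ chi d p < ⊤}


/-- The (ordered) pairs `(a,b)` and `(u,v)` span the same undirected edge. -/
def SameEdge {d : ℕ} (a b u v : Vertex d) : Prop := (a = u ∧ b = v) ∨ (a = v ∧ b = u)

/-- `γ` is an `n`-step walk of occupied bonds from `x` to `y`. -/
def OccWalk {d n : ℕ} (ω : Config d) (γ : Fin (n + 1) → Vertex d) (x y : Vertex d) : Prop :=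
  γ 0 = x ∧ γ (Fin.last n) = y ∧ ∀ i : Fin n, Occ ω (γ i.castSucc) (γ i.succ)

/-- The bonds used by the walk `γ` are pairwise distinct. -/
def DistinctBonds {d n : ℕ} (γ : Fin (n + 1) → Vertex d) : Prop :=
  ∀ i j : Fin n, i ≠ j → ¬ SameEdge (γ i.castSucc) (γ i.succ) (γ j.castSucc) (γ j.succ)

/-- Occupation of the edge `{a,c}` avoiding the undirected edge `{u,v}`. -/
def OccAvoid {d : ℕ} (ω : Config d) (u v a c : Vertex d) : Prop :=
  Occ ω a c ∧ ¬ SameEdge a c u v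

/-- `C̃^{{u,v}}(x)`: the set of vertices connected to `x` in the configuration in which
the bond `{u,v}` is made vacant. -/
def tildeC {d : ℕ} (ω : Config d) (u v x : Vertex d) : Set (Vertex d) :=
  {y | Relation.ReflTransGen (OccAvoid ω u v) x y}

/-- `x ⇔ y`: doubly connected, i.e. there are two bond-disjoint paths of occupied bonds
from `x` to `y` (by convention, `x ⇔ x`). -/
def DConn {d : ℕ} (ω : Config d) (x y : Vertex d) : Prop :=
  x = y ∨ ∃ (n m : ℕ) (γ : Fin (n + 1) → Vertex d) (δ : Fin (m + 1) → Vertex d),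
    OccWalk ω γ x y ∧ OccWalk ω δ x y ∧
      ∀ (i : Fin n) (j : Fin m),
        ¬ SameEdge (γ i.castSucc) (γ i.succ) (δ j.castSucc) (δ j.succ)

end NoBLE

/-! On the event `0 ⇔ x` with `x ≠ 0`, take two bond-disjoint occupied walks from `0` to `x`
and let `{a, x}` and `{b, x}` be the bonds through which they first enter `x`; these bonds are
distinct. The vertex `a` stays connected to `x` when `{a, x}` is made vacant: go from `x` back
to `0` along the second walk, which avoids `{a, x}`, then from `0` to `a` along the first walk
before it first visits `x`. The same holds for `b`, so for every configuration in `{0 ⇔ x}` at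
most `2d - 2` of the `2d` events in the sum occur, and integrating their number over `{0 ⇔ x}`
gives the bound. -/

open Finset Relation

section
variable {α : Type*} {r : α → α → Prop}

theorem Relation.reflTransGen_of_fin_steps {n : ℕ} (γ : Fin (n + 1) → α)
    (h : ∀ i : Fin n, r (γ i.castSucc) (γ i.succ)) :
    ReflTransGen r (γ 0) (γ (Fin.last n)) := by
  induction n with
  | zero => rfl
  | succ n ih => exact (ih (γ ∘ Fin.castSucc) fun i => h i.castSucc).tail (h (Fin.last n))

theorem Relation.ReflTransGen.exists_first_arrival {s t : α} (h : ReflTransGen r s t)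
    (hst : s ≠ t) : ∃ a, r a t ∧ ReflTransGen (fun b c => r b c ∧ b ≠ t ∧ c ≠ t) s a := by
  suffices ∀ u, ReflTransGen r s u →
      (ReflTransGen (fun b c => r b c ∧ b ≠ t ∧ c ≠ t) s u ∧ u ≠ t) ∨
        ∃ a, r a t ∧ ReflTransGen (fun b c => r b c ∧ b ≠ t ∧ c ≠ t) s a by
    simpa using this t h
  intro u hu
  induction hu with
  | refl => exact .inl ⟨.refl, hst⟩
  | @tail b c _ hbc ih =>
    rcases ih with ⟨hsb, hb⟩ | found
    · by_cases hc : c = t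
      · exact .inr ⟨b, hc ▸ hbc, hsb⟩
      · exact .inl ⟨hsb.tail ⟨hbc, hb, hc⟩, hc⟩
    · exact .inr found

end

section
variable {Ω V : Type*} [MeasurableSpace Ω]

theorem measurable_reflTransGen [Countable V] {R : Ω → V → V → Prop}
    (hR : ∀ a c, Measurable fun ω => R ω a c) (x y : V) :
    Measurable fun ω => ReflTransGen (R ω) x y := by
  have hchain : (fun ω => ReflTransGen (R ω) x y) = fun ω => ∃ l : List V,
      (x :: l).IsChain (R ω) ∧ (x :: l).getLast (List.cons_ne_nil _ _) = y := by
    ext ω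
    exact ⟨List.exists_isChain_cons_of_relationReflTransGen,
      fun ⟨l, hl, hlast⟩ => List.relationReflTransGen_of_exists_isChain_cons l hl hlast⟩
  rw [hchain]
  refine .exists fun l => .and ?_ measurable_const
  simp_rw [List.isChain_iff_getElem]
  exact .forall fun i => .forall fun _ => hR _ _

open MeasureTheory in
theorem MeasureTheory.sum_measure_inter_le_mul {ι : Type*} [Fintype ι] (μ : Measure Ω)
    {A : Set Ω} {B : ι → Set Ω} (hA : MeasurableSet A) (hB : ∀ i, MeasurableSet (B i)) {k : ℕ}
    (hk : ∀ ω ∈ A, ∀ s : Finset ι, (∀ i ∈ s, ω ∈ B i) → #s ≤ k) :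
    ∑ i, μ (A ∩ B i) ≤ k * μ A := by
  classical
  calc ∑ i, μ (A ∩ B i) = ∫⁻ ω, ∑ i, (A ∩ B i).indicator 1 ω ∂μ := by
        rw [lintegral_finsetSum _ fun i _ => measurable_one.indicator (hA.inter (hB i))]
        simp only [lintegral_indicator_one (hA.inter (hB _))]
    _ ≤ ∫⁻ ω, A.indicator (fun _ => (k : ℝ≥0∞)) ω ∂μ := by
        refine lintegral_mono fun ω => ?_
        by_cases hω : ω ∈ A
        · simp only [Set.indicator_apply, Set.mem_inter_iff, hω, true_and, Pi.one_apply, sum_boole]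
          exact_mod_cast hk ω hω _ fun i hi => (mem_filter.1 hi).2
        · simp [hω]
    _ = k * μ A := lintegral_indicator_const hA _

end

namespace NoBLE

variable {d : ℕ} {ω : Config d}

theorem measurable_dConn (x y : Vertex d) : Measurable fun ω : Config d => DConn ω x y := by
  unfold DConn OccWalk Occ
  fun_prop

theorem measurable_mem_tildeC (u v x y : Vertex d) :
    Measurable fun ω : Config d => y ∈ tildeC ω u v x :=
  measurable_reflTransGen (fun a c => by unfold OccAvoid Occ; fun_prop) x y

theorem SameEdge.swap {a b u v : Vertex d} (h : SameEdge a b u v) : SameEdge b a u v :=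
  h.symm.imp And.symm And.symm

theorem SameEdge.comm {a b u v : Vertex d} (h : SameEdge a b u v) : SameEdge u v a b :=
  h.imp (fun ⟨h₁, h₂⟩ => ⟨h₁.symm, h₂.symm⟩) fun ⟨h₁, h₂⟩ => ⟨h₂.symm, h₁.symm⟩

instance (u v : Vertex d) : Std.Symm (OccAvoid ω u v) :=
  ⟨fun _ _ h => ⟨h.1.symm, fun hs => h.2 hs.swap⟩⟩

theorem OccWalk.reflTransGen {n : ℕ} {γ : Fin (n + 1) → Vertex d} {s t : Vertex d}
    {R : Vertex d → Vertex d → Prop} (hγ : OccWalk ω γ s t)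
    (hR : ∀ i : Fin n, Occ ω (γ i.castSucc) (γ i.succ) → R (γ i.castSucc) (γ i.succ)) :
    ReflTransGen R s t :=
  hγ.1 ▸ hγ.2.1 ▸ reflTransGen_of_fin_steps γ fun i => hR i (hγ.2.2 i)

theorem exists_dirVec_eq_of_occ {a x : Vertex d} (h : Occ ω a x) :
    ∃ κ : Dir d, x - dirVec κ = a := by
  rcases h with ⟨i, rfl, -⟩ | ⟨i, rfl, -⟩
  · exact ⟨(i, true), by simp [dirVec]⟩
  · exact ⟨(i, false), by simp [dirVec]⟩

theorem OccWalk.exists_step_mem_tildeC {n m : ℕ} {γ : Fin (n + 1) → Vertex d}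
    {δ : Fin (m + 1) → Vertex d} {y x : Vertex d} (hγ : OccWalk ω γ y x) (hδ : OccWalk ω δ y x)
    (hdisj : ∀ (i : Fin n) (j : Fin m),
      ¬ SameEdge (γ i.castSucc) (γ i.succ) (δ j.castSucc) (δ j.succ))
    (hxy : y ≠ x) :
    ∃ i : Fin n, γ i.succ = x ∧ γ i.castSucc ∈ tildeC ω x (γ i.castSucc) x := by
  obtain ⟨a, ⟨-, i, rfl, hix⟩, hya⟩ :=
    (hγ.reflTransGen (R := fun a c => Occ ω a c ∧ ∃ i : Fin n, γ i.castSucc = a ∧ γ i.succ = c)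
      fun i h => ⟨h, i, rfl, rfl⟩).exists_first_arrival hxy
  refine ⟨i, hix, ?_⟩
  have hyx : ReflTransGen (OccAvoid ω x (γ i.castSucc)) y x :=
    hδ.reflTransGen fun j h => ⟨h, fun hs => hdisj i j (hix ▸ hs.comm.swap)⟩
  have hya' : ReflTransGen (OccAvoid ω x (γ i.castSucc)) y (γ i.castSucc) :=
    ReflTransGen.mono
      (fun b c ⟨⟨hbc, _⟩, hb, hc⟩ => ⟨hbc, fun hs => hs.elim (hb ·.1) (hc ·.2)⟩) _ _ hya
  exact (symm hyx).trans hya'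

theorem DConn.exists_two_dirs_mem_tildeC {x y : Vertex d} (h : DConn ω y x) (hxy : y ≠ x) :
    ∃ κ₁ κ₂ : Dir d, κ₁ ≠ κ₂ ∧ x - dirVec κ₁ ∈ tildeC ω x (x - dirVec κ₁) x ∧
      x - dirVec κ₂ ∈ tildeC ω x (x - dirVec κ₂) x := by
  obtain rfl | ⟨n, m, γ, δ, hγ, hδ, hdisj⟩ := h
  · exact absurd rfl hxy
  obtain ⟨i, hix, hi⟩ := hγ.exists_step_mem_tildeC hδ hdisj hxy
  obtain ⟨j, hjx, hj⟩ := hδ.exists_step_mem_tildeC hγ (fun j i hs => hdisj i j hs.comm) hxy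
  obtain ⟨κ₁, hκ₁⟩ := exists_dirVec_eq_of_occ (hix ▸ hγ.2.2 i)
  obtain ⟨κ₂, hκ₂⟩ := exists_dirVec_eq_of_occ (hjx ▸ hδ.2.2 j)
  refine ⟨κ₁, κ₂, ?_, hκ₁ ▸ hi, hκ₂ ▸ hj⟩
  rintro rfl
  exact hdisj i j (.inl ⟨hκ₁.symm.trans hκ₂, hix.trans hjx.symm⟩)

theorem DConn.card_le_of_forall_notMem_tildeC {x y : Vertex d} (h : DConn ω y x)
    (hxy : y ≠ x) {s : Finset (Dir d)} (hs : ∀ κ ∈ s, x - dirVec κ ∉ tildeC ω x (x - dirVec κ) x) :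
    #s ≤ 2 * d - 2 := by
  obtain ⟨κ₁, κ₂, hne, h₁, h₂⟩ := h.exists_two_dirs_mem_tildeC hxy
  calc #s ≤ #(univ \ {κ₁, κ₂}) := card_le_card fun κ hκ => by
        simp only [Finset.mem_sdiff, mem_univ, mem_insert, mem_singleton, not_or, true_and]
        exact ⟨fun h => hs κ hκ (h ▸ h₁), fun h => hs κ hκ (h ▸ h₂)⟩
    _ = 2 * d - 2 := by simp [card_univ_sdiff, card_pair hne, mul_comm]

theorem overcounting_bound_general (d : ℕ) (p : ℝ) (x : Vertex d) (hx : x ≠ 0) :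
    (∑ κ : Dir d, percMeasure d p
        ({ω | DConn ω 0 x} ∩ {ω | x - dirVec κ ∉ tildeC ω x (x - dirVec κ) x})) ≤
      (2 * (d : ℝ≥0∞) - 2) * percMeasure d p {ω | DConn ω 0 x} := by
  calc _ ≤ ((2 * d - 2 : ℕ) : ℝ≥0∞) * percMeasure d p {ω | DConn ω 0 x} :=
        MeasureTheory.sum_measure_inter_le_mul _ (measurable_dConn 0 x).setOf
          (fun κ => (measurable_mem_tildeC _ _ _ _).not.setOf)
          fun ω hω _ hs => hω.card_le_of_forall_notMem_tildeC hx.symm hs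
    _ = _ := by rw [ENNReal.natCast_sub]; push_cast; rfl

/-- **Overcounting bound for the `N = 0` NoBLE coefficient** (proof of Lemma 4.1). -/
theorem overcounting_bound (d : ℕ) (hd : 2 ≤ d) (p : ℝ) (hp0 : 0 ≤ p) (hp1 : p ≤ 1)
    (x : Vertex d) (hx : x ≠ 0) :
    (∑ κ : Dir d, percMeasure d p
        ({ω | DConn ω 0 x} ∩ {ω | x - dirVec κ ∉ tildeC ω x (x - dirVec κ) x})) ≤
      (2 * (d : ℝ≥0∞) - 2) * percMeasure d p {ω | DConn ω 0 x} :=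
  overcounting_bound_general d p x hx

end NoBLE
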